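/- For the operator A = −J₀ d/dt − T·diag(0,1) on L²(ℝ/ℤ, ℝ²) with T > 0, every eigenvector corresponding to a positive eigenvalue λ > 0 is nowhere vanishing and has winding number at least 1 around the origin. -/

import Mathlib

/-- Auxiliary geometric fact: if a plane curve `(a, b)` never vanishes and its
velocity is everywhere radial (`a * b' - a' * b = 0`), then its direction
`a / |(a,b)|` is constant. -/
lemma rot_const (a b da db : ℝ → ℝ)
    (ha : ∀ t, HasDerivAt a (da t) t) (hb : ∀ t, HasDerivAt b (db t) t)
    (horth : ∀ t, a t * db t - da t * b t = 0)
    (hpos : ∀ t, 0 < a t ^ 2 + b t ^ 2) :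
    ∀ s t : ℝ, a s / Real.sqrt (a s ^ 2 + b s ^ 2) = a t / Real.sqrt (a t ^ 2 + b t ^ 2) := by
  have hr : ∀ t, HasDerivAt (fun u => a u ^ 2 + b u ^ 2)
      (2 * a t * da t + 2 * b t * db t) t := by
    intro t
    have h := ((ha t).pow 2).add ((hb t).pow 2)
    have h' : HasDerivAt (fun u => a u ^ 2 + b u ^ 2)
        (((2 : ℕ) : ℝ) * a t ^ (2 - 1) * da t + ((2 : ℕ) : ℝ) * b t ^ (2 - 1) * db t) t := h
    convert h' using 1
    push_cast
    ring
  have hn : ∀ t, HasDerivAt (fun u => Real.sqrt (a u ^ 2 + b u ^ 2))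
      ((2 * a t * da t + 2 * b t * db t) / (2 * Real.sqrt (a t ^ 2 + b t ^ 2))) t :=
    fun t => (hr t).sqrt (hpos t).ne'
  have hnpos : ∀ t, 0 < Real.sqrt (a t ^ 2 + b t ^ 2) := fun t => Real.sqrt_pos.2 (hpos t)
  have hnsq : ∀ t, Real.sqrt (a t ^ 2 + b t ^ 2) ^ 2 = a t ^ 2 + b t ^ 2 :=
    fun t => Real.sq_sqrt (hpos t).le
  have hA : ∀ t, HasDerivAt (fun u => a u / Real.sqrt (a u ^ 2 + b u ^ 2)) 0 t := by
    intro t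
    have h := (ha t).div (hn t) (hnpos t).ne'
    set N := Real.sqrt (a t ^ 2 + b t ^ 2) with hN
    have key : (da t * N - a t * ((2 * a t * da t + 2 * b t * db t) / (2 * N))) / N ^ 2 = 0 := by
      rw [div_eq_zero_iff]
      left
      rw [sub_eq_zero]
      field_simp
      rw [eq_div_iff (hnpos t).ne']
      linear_combination da t * hnsq t - b t * horth t
    rwa [key] at h
  intro s t
  exact is_const_of_deriv_eq_zero (fun u => (hA u).differentiableAt) (fun u => (hA u).deriv) s t

/-- The asymptotic operator A = −J₀ d/dt − T·diag(0,1) acting on 1-periodic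
ℝ²-valued functions, where J₀(x,y) = (−y,x); so
(Aη)(t) = (η₂'(t), −η₁'(t) − T·η₂(t)). -/
noncomputable def asympOp (T : ℝ) (η : ℝ → ℝ × ℝ) : ℝ → ℝ × ℝ := fun t =>
  (deriv (fun u => (η u).2) t, -(deriv (fun u => (η u).1) t) - T * (η t).2)

/-- every eigenvector of A with positive eigenvalue λ > 0 is nowhere
vanishing and has winding number at least 1 around the origin; the winding number is
expressed via a continuous angle lift θ with η(t) = |η(t)|·(cos θ(t), sin θ(t)),
the winding over a period being (θ(1) − θ(0))/(2π). -/
theorem asympOp_positive_eigenvalue_winding (T : ℝ) (hT : 0 < T)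
    (lam : ℝ) (hlam : 0 < lam) (η : ℝ → ℝ × ℝ)
    (hper : ∀ t, η (t + 1) = η t)
    (hdiff1 : Differentiable ℝ (fun u => (η u).1))
    (hdiff2 : Differentiable ℝ (fun u => (η u).2))
    (heig : ∀ t, asympOp T η t = lam • η t)
    (hnz : ∃ t, η t ≠ (0, 0)) :
    (∀ t, η t ≠ (0, 0)) ∧
    (∀ θ : ℝ → ℝ, Continuous θ →
      (∀ t, η t = Real.sqrt ((η t).1 ^ 2 + (η t).2 ^ 2) •
          (Real.cos (θ t), Real.sin (θ t))) →
      θ 1 - θ 0 ≥ 2 * Real.pi) := by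
  -- derivatives of the two components
  have hd1 : ∀ t, HasDerivAt (fun u => (η u).1) (-(lam + T) * (η t).2) t := by
    intro t
    have h := congrArg Prod.snd (heig t)
    simp only [asympOp, Prod.smul_snd, smul_eq_mul] at h
    have hder : deriv (fun u => (η u).1) t = -(lam + T) * (η t).2 := by linarith
    have hd := (hdiff1 t).hasDerivAt
    rwa [hder] at hd
  have hd2 : ∀ t, HasDerivAt (fun u => (η u).2) (lam * (η t).1) t := by
    intro t
    have h := congrArg Prod.fst (heig t)
    simp only [asympOp, Prod.smul_fst, smul_eq_mul] at h
    have hd := (hdiff2 t).hasDerivAt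
    rwa [h] at hd
  have hdr : ∀ t, HasDerivAt (fun u => (η u).1 ^ 2 + (η u).2 ^ 2)
      (-(2 * T) * ((η t).1 * (η t).2)) t := by
    intro t
    have h := ((hd1 t).pow 2).add ((hd2 t).pow 2)
    have h' : HasDerivAt (fun u => (η u).1 ^ 2 + (η u).2 ^ 2)
        (((2 : ℕ) : ℝ) * (η t).1 ^ (2 - 1) * (-(lam + T) * (η t).2) +
          ((2 : ℕ) : ℝ) * (η t).2 ^ (2 - 1) * (lam * (η t).1)) t := h
    convert h' using 1
    push_cast
    ring
  -- nonvanishing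
  have hrne : ∀ t, η t ≠ (0, 0) → 0 < (η t).1 ^ 2 + (η t).2 ^ 2 := by
    intro t ht
    by_contra h
    push_neg at h
    have h1 : (η t).1 = 0 := by nlinarith [sq_nonneg (η t).1, sq_nonneg (η t).2]
    have h2 : (η t).2 = 0 := by nlinarith [sq_nonneg (η t).1, sq_nonneg (η t).2]
    exact ht (Prod.ext_iff.mpr ⟨by simpa using h1, by simpa using h2⟩)
  have hnv : ∀ t, η t ≠ (0, 0) := by
    intro t0 h0
    obtain ⟨t1, h1⟩ := hnz
    have hr1 : 0 < (η t1).1 ^ 2 + (η t1).2 ^ 2 := hrne t1 h1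
    have hr0 : (η t0).1 ^ 2 + (η t0).2 ^ 2 = 0 := by rw [h0]; norm_num
    have hlin : ∀ t : ℝ, HasDerivAt (fun u : ℝ => T * u) T t := by
      intro t
      simpa using (hasDerivAt_id t).const_mul T
    have hmono : Monotone (fun t => ((η t).1 ^ 2 + (η t).2 ^ 2) * Real.exp (T * t)) := by
      apply monotone_of_deriv_nonneg
      · exact fun t => ((hdr t).mul ((hlin t).exp)).differentiableAt
      · intro t
        have h := (hdr t).mul ((hlin t).exp)
        have h' : HasDerivAt (fun t => ((η t).1 ^ 2 + (η t).2 ^ 2) * Real.exp (T * t))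
          (-(2 * T) * ((η t).1 * (η t).2) * Real.exp (T * t) +
            ((η t).1 ^ 2 + (η t).2 ^ 2) * (Real.exp (T * t) * T)) t := h
        rw [h'.deriv]
        nlinarith [mul_nonneg (mul_nonneg hT.le (Real.exp_pos (T * t)).le)
          (sq_nonneg ((η t).1 - (η t).2))]
    have hanti : Antitone (fun t => ((η t).1 ^ 2 + (η t).2 ^ 2) * Real.exp (-(T * t))) := by
      apply antitone_of_deriv_nonpos
      · exact fun t => ((hdr t).mul (((hlin t).neg).exp)).differentiableAt
      · intro t
        have h := (hdr t).mul (((hlin t).neg).exp)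
        have h' : HasDerivAt (fun t => ((η t).1 ^ 2 + (η t).2 ^ 2) * Real.exp (-(T * t)))
          (-(2 * T) * ((η t).1 * (η t).2) * Real.exp (-(T * t)) +
            ((η t).1 ^ 2 + (η t).2 ^ 2) * (Real.exp (-(T * t)) * -T)) t := h
        rw [h'.deriv]
        nlinarith [mul_nonneg (mul_nonneg hT.le (Real.exp_pos (-(T * t))).le)
          (sq_nonneg ((η t).1 + (η t).2))]
    rcases le_total t0 t1 with h | h
    · have hle := hanti h
      simp only at hle
      nlinarith [Real.exp_pos (-(T * t1)), Real.exp_pos (-(T * t0))]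
    · have hle := hmono h
      simp only at hle
      nlinarith [Real.exp_pos (T * t1), Real.exp_pos (T * t0)]
  refine ⟨hnv, ?_⟩
  intro θ hθc hθ
  have hrpos : ∀ t, 0 < (η t).1 ^ 2 + (η t).2 ^ 2 := fun t => hrne t (hnv t)
  have hc1 : Continuous fun u => (η u).1 := hdiff1.continuous
  have hc2 : Continuous fun u => (η u).2 := hdiff2.continuous
  -- the angular speed
  set ψ : ℝ → ℝ := fun u => (lam * (η u).1 ^ 2 + (lam + T) * (η u).2 ^ 2) /
      ((η u).1 ^ 2 + (η u).2 ^ 2) with hψdef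
  have hψc : Continuous ψ := by
    apply Continuous.div
    · fun_prop
    · fun_prop
    · exact fun t => (hrpos t).ne'
  have hψpos : ∀ t, 0 < ψ t := by
    intro t
    apply div_pos ?_ (hrpos t)
    nlinarith [hrpos t, sq_nonneg (η t).2]
  -- the angle function F
  set F : ℝ → ℝ := fun t => ∫ s in (0:ℝ)..t, ψ s with hFdef
  have hFd : ∀ t, HasDerivAt F (ψ t) t :=
    fun t => (hψc.integral_hasStrictDerivAt 0 t).hasDerivAt
  have hFdiff : Differentiable ℝ F := fun t => (hFd t).differentiableAt
  have hFc : Continuous F := hFdiff.continuous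
  have hF0 : F 0 = 0 := intervalIntegral.integral_same
  have hF1pos : 0 < F 1 :=
    intervalIntegral.intervalIntegral_pos_of_pos (hψc.intervalIntegrable 0 1) hψpos one_pos
  -- rotated coordinates
  set aF : ℝ → ℝ := fun u => (η u).1 * Real.cos (F u) + (η u).2 * Real.sin (F u) with haFdef
  set bF : ℝ → ℝ := fun u => -(η u).1 * Real.sin (F u) + (η u).2 * Real.cos (F u) with hbFdef
  have hda : ∀ t, HasDerivAt aF
      ((-(lam + T) * (η t).2) * Real.cos (F t) + (η t).1 * (-Real.sin (F t) * ψ t) +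
        ((lam * (η t).1) * Real.sin (F t) + (η t).2 * (Real.cos (F t) * ψ t))) t := by
    intro t
    rw [haFdef]
    exact ((hd1 t).mul (hFd t).cos).add ((hd2 t).mul (hFd t).sin)
  have hdb : ∀ t, HasDerivAt bF
      ((-(-(lam + T) * (η t).2)) * Real.sin (F t) + (-(η t).1) * (Real.cos (F t) * ψ t) +
        ((lam * (η t).1) * Real.cos (F t) + (η t).2 * (-Real.sin (F t) * ψ t))) t := by
    intro t
    rw [hbFdef]
    exact (((hd1 t).neg).mul (hFd t).sin).add ((hd2 t).mul (hFd t).cos)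
  have horth : ∀ t, aF t *
      ((-(-(lam + T) * (η t).2)) * Real.sin (F t) + (-(η t).1) * (Real.cos (F t) * ψ t) +
        ((lam * (η t).1) * Real.cos (F t) + (η t).2 * (-Real.sin (F t) * ψ t))) -
      ((-(lam + T) * (η t).2) * Real.cos (F t) + (η t).1 * (-Real.sin (F t) * ψ t) +
        ((lam * (η t).1) * Real.sin (F t) + (η t).2 * (Real.cos (F t) * ψ t))) * bF t = 0 := by
    intro t
    rw [haFdef, hbFdef, hψdef]
    field_simp [(hrpos t).ne']
    ring
  have habr : ∀ t, aF t ^ 2 + bF t ^ 2 = (η t).1 ^ 2 + (η t).2 ^ 2 := by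
    intro t
    rw [haFdef, hbFdef]
    simp only
    linear_combination ((η t).1 ^ 2 + (η t).2 ^ 2) * Real.sin_sq_add_cos_sq (F t)
  have hposab : ∀ t, 0 < aF t ^ 2 + bF t ^ 2 := fun t => (habr t) ▸ hrpos t
  have hAconst := rot_const aF bF _ _ hda hdb horth hposab
  have hBconst := rot_const bF aF _ _ hdb hda
    (fun t => by linear_combination - horth t) (fun t => by linarith [hposab t])
  -- express aF, bF via the angle θ
  have hθ1 : ∀ t, (η t).1 = Real.sqrt ((η t).1 ^ 2 + (η t).2 ^ 2) * Real.cos (θ t) := by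
    intro t
    have h := congrArg Prod.fst (hθ t)
    simpa using h
  have hθ2 : ∀ t, (η t).2 = Real.sqrt ((η t).1 ^ 2 + (η t).2 ^ 2) * Real.sin (θ t) := by
    intro t
    have h := congrArg Prod.snd (hθ t)
    simpa using h
  have hnpos : ∀ t, 0 < Real.sqrt ((η t).1 ^ 2 + (η t).2 ^ 2) :=
    fun t => Real.sqrt_pos.2 (hrpos t)
  have hacos : ∀ t, aF t = Real.sqrt ((η t).1 ^ 2 + (η t).2 ^ 2) * Real.cos (θ t - F t) := by
    intro t
    rw [haFdef, Real.cos_sub]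
    simp only
    linear_combination Real.cos (F t) * hθ1 t + Real.sin (F t) * hθ2 t
  have hbsin : ∀ t, bF t = Real.sqrt ((η t).1 ^ 2 + (η t).2 ^ 2) * Real.sin (θ t - F t) := by
    intro t
    rw [hbFdef, Real.sin_sub]
    simp only
    linear_combination Real.cos (F t) * hθ2 t - Real.sin (F t) * hθ1 t
  have hAt : ∀ t, Real.cos (θ t - F t) = Real.cos (θ 0) := by
    intro t
    have h := hAconst t 0
    rw [habr t, habr 0, hacos t, hacos 0, hF0, sub_zero,
      mul_div_cancel_left₀ _ (hnpos t).ne', mul_div_cancel_left₀ _ (hnpos 0).ne'] at h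
    exact h
  have habr' : ∀ u, bF u ^ 2 + aF u ^ 2 = (η u).1 ^ 2 + (η u).2 ^ 2 :=
    fun u => by linarith [habr u]
  have hBt : ∀ t, Real.sin (θ t - F t) = Real.sin (θ 0) := by
    intro t
    have h := hBconst t 0
    rw [habr' t, habr' 0, hbsin t, hbsin 0, hF0, sub_zero,
      mul_div_cancel_left₀ _ (hnpos t).ne', mul_div_cancel_left₀ _ (hnpos 0).ne'] at h
    exact h
  have hg1 : ∀ t, Real.cos (θ t - F t - θ 0) = 1 := by
    intro t
    rw [Real.cos_sub, hAt t, hBt t]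
    linear_combination Real.sin_sq_add_cos_sq (θ 0)
  have hgc : Continuous fun t => θ t - F t - θ 0 := (hθc.sub hFc).sub continuous_const
  have hset : {t : ℝ | θ t - F t - θ 0 = 0} = Set.univ := by
    apply IsClopen.eq_univ
    · constructor
      · exact isClosed_eq hgc continuous_const
      · rw [isOpen_iff_mem_nhds]
        intro x hx
        have hx0 : θ x - F x - θ 0 = 0 := hx
        have hUmem : x ∈ (fun t => θ t - F t - θ 0) ⁻¹' Set.Ioo (-(2 * Real.pi)) (2 * Real.pi) := by
          simp only [Set.mem_preimage, Set.mem_Ioo, hx0]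
          constructor <;> nlinarith [Real.pi_pos]
        refine Filter.mem_of_superset ((isOpen_Ioo.preimage hgc).mem_nhds hUmem) ?_
        intro y hy
        obtain ⟨m, hm⟩ := (Real.cos_eq_one_iff _).1 (hg1 y)
        have hy' : -(2 * Real.pi) < θ y - F y - θ 0 ∧ θ y - F y - θ 0 < 2 * Real.pi := hy
        have hm0 : m = 0 := by
          rcases lt_trichotomy m 0 with h | h | h
          · have hm' : m ≤ -1 := by omega
            have hm1 : (m : ℝ) ≤ -1 := by exact_mod_cast hm'
            nlinarith [Real.pi_pos, hy'.1]
          · exact h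
          · have hm1 : (1 : ℝ) ≤ (m : ℝ) := by exact_mod_cast h
            nlinarith [Real.pi_pos, hy'.2]
        show θ y - F y - θ 0 = 0
        rw [hm0] at hm
        simpa using hm.symm
    · exact ⟨0, by simp [Set.mem_setOf_eq, hF0]⟩
  have hgz : ∀ t : ℝ, θ t - F t - θ 0 = 0 := by
    intro t
    have : t ∈ {t : ℝ | θ t - F t - θ 0 = 0} := hset ▸ Set.mem_univ t
    exact this
  have hθF1 : θ 1 - θ 0 = F 1 := by linarith [hgz 1]
  -- periodicity
  have hη1 : η 1 = η 0 := by simpa using hper 0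
  have hr10 : (η 1).1 ^ 2 + (η 1).2 ^ 2 = (η 0).1 ^ 2 + (η 0).2 ^ 2 := by rw [hη1]
  have hcosper : Real.cos (θ 1) = Real.cos (θ 0) := by
    have h1 := hθ1 1
    rw [hη1] at h1
    exact (mul_left_cancel₀ (hnpos 0).ne' ((hθ1 0).symm.trans h1)).symm
  have hsinper : Real.sin (θ 1) = Real.sin (θ 0) := by
    have h1 := hθ2 1
    rw [hη1] at h1
    exact (mul_left_cancel₀ (hnpos 0).ne' ((hθ2 0).symm.trans h1)).symm
  have hcos10 : Real.cos (θ 1 - θ 0) = 1 := by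
    rw [Real.cos_sub, hcosper, hsinper]
    linear_combination Real.sin_sq_add_cos_sq (θ 0)
  obtain ⟨m, hm⟩ := (Real.cos_eq_one_iff _).1 hcos10
  have hmpos : 1 ≤ m := by
    rcases lt_or_ge m 1 with h | h
    · exfalso
      have hm1 : (m : ℝ) ≤ 0 := by exact_mod_cast Int.lt_add_one_iff.mp h
      nlinarith [Real.pi_pos, hθF1, hF1pos]
    · exact h
  have hm1 : (1 : ℝ) ≤ (m : ℝ) := by exact_mod_cast hmpos
  nlinarith [Real.pi_pos]
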